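/- Let f be a Smale A-homeomorphism of a closed manifold Mⁿ whose source basic sets α(f) are all trivial, and let x ∈ Mⁿ lie outside the trapping balls around the sources. If the α-limit set of x is contained in the union of saddle basic sets, then x lies in the unstable manifold of some saddle basic set; consequently x ∈ A(f). -/

import Mathlib

open Filter Topology Set Metric

section Defs

variable {X : Type*} [MetricSpace X]

/-- The non-wandering set of a homeomorphism `f`. -/
def nonWanderingSet (f : X ≃ₜ X) : Set X :=
  {p | ∀ U ∈ 𝓝 p, ∃ n : ℕ, 1 ≤ n ∧ ((⇑f)^[n] '' U ∩ U).Nonempty}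

/-- The stable set `W^s(Λ)` of an invariant set `Λ`: points whose forward orbit
converges to `Λ`. -/
def stableSetOf (f : X ≃ₜ X) (Λ : Set X) : Set X :=
  {y | Tendsto (fun k => infDist ((⇑f)^[k] y) Λ) atTop (𝓝 0)}

/-- The unstable set `W^u(Λ)` of an invariant set `Λ`: the stable set for `f⁻¹`. -/
def unstableSetOf (f : X ≃ₜ X) (Λ : Set X) : Set X :=
  stableSetOf f.symm Λ

/-- The full orbit of a point under `f`. -/
def fullOrbit (f : X ≃ₜ X) (p : X) : Set X :=
  Set.range fun k : ℤ => (f.toEquiv ^ k) p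

/-- `U` is an open trapping region for `f`. -/
def IsTrappingRegion (f : X ≃ₜ X) (U : Set X) : Prop :=
  IsOpen U ∧ f '' closure U ⊆ U

/-- The attracting set determined by a trapping region `U`. -/
def attractingSetOf (f : X ≃ₜ X) (U : Set X) : Set X :=
  ⋂ k : ℕ, (⇑f)^[k] '' U

/-- `Λ` is an attracting set of `f`: the attracting set of some trapping region. -/
def IsAttractingSet (f : X ≃ₜ X) (Λ : Set X) : Prop :=
  ∃ U, IsTrappingRegion f U ∧ Λ = attractingSetOf f U

/-- `Λ` is a repelling set of `f`: an attracting set of `f⁻¹`. -/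
def IsRepellingSet (f : X ≃ₜ X) (Λ : Set X) : Prop :=
  IsAttractingSet f.symm Λ

/-- The basin of an attracting set `A`: the union of all open trapping regions `U`
with `A_U = A`. -/
def basinOf (f : X ≃ₜ X) (A : Set X) : Set X :=
  ⋃₀ {U | IsTrappingRegion f U ∧ attractingSetOf f U = A}

/-- Topological transitivity of `f` on `Λ`: some orbit in `Λ` is dense in `Λ`. -/
def IsTransitiveOn (f : X ≃ₜ X) (Λ : Set X) : Prop :=
  ∃ x ∈ Λ, Λ ⊆ closure (fullOrbit f x)

/-- A spectral decomposition of a Smale A-homeomorphism `f`: the non-wandering set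
is a finite disjoint union of closed invariant transitive basic sets (each
consisting of hyperbolic-type points, with periodic points dense), classified into
sink basic sets (`W^u(Λ) = Λ`), source basic sets (`W^s(Λ) = Λ`) and saddle basic
sets (neither). -/
structure SmaleDecomp (f : X ≃ₜ X) where
  /-- number of sink basic sets -/
  a : ℕ
  /-- number of source basic sets -/
  b : ℕ
  /-- number of saddle basic sets -/
  c : ℕ
  /-- the sink basic sets -/
  snk : Fin a → Set X
  /-- the source basic sets -/
  src : Fin b → Set X
  /-- the saddle basic sets -/
  sad : Fin c → Set X
  snk_closed : ∀ i, IsClosed (snk i)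
  src_closed : ∀ i, IsClosed (src i)
  sad_closed : ∀ i, IsClosed (sad i)
  snk_nonempty : ∀ i, (snk i).Nonempty
  src_nonempty : ∀ i, (src i).Nonempty
  sad_nonempty : ∀ i, (sad i).Nonempty
  snk_inv : ∀ i, f '' snk i = snk i
  src_inv : ∀ i, f '' src i = src i
  sad_inv : ∀ i, f '' sad i = sad i
  snk_trans : ∀ i, IsTransitiveOn f (snk i)
  src_trans : ∀ i, IsTransitiveOn f (src i)
  sad_trans : ∀ i, IsTransitiveOn f (sad i)
  snk_pairwise : Pairwise (Function.onFun Disjoint snk)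
  src_pairwise : Pairwise (Function.onFun Disjoint src)
  sad_pairwise : Pairwise (Function.onFun Disjoint sad)
  snk_src_disj : ∀ i j, Disjoint (snk i) (src j)
  snk_sad_disj : ∀ i j, Disjoint (snk i) (sad j)
  src_sad_disj : ∀ i j, Disjoint (src i) (sad j)
  nw_eq : nonWanderingSet f = (⋃ i, snk i) ∪ (⋃ i, src i) ∪ (⋃ i, sad i)
  snk_is_sink : ∀ i, unstableSetOf f (snk i) = snk i
  src_is_source : ∀ i, stableSetOf f (src i) = src i
  sad_is_saddle : ∀ i, unstableSetOf f (sad i) ≠ sad i ∧ stableSetOf f (sad i) ≠ sad i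

/-- The union of the source basic sets `α̃(f)`. -/
def SmaleDecomp.alphaUnion {f : X ≃ₜ X} (D : SmaleDecomp f) : Set X :=
  ⋃ i, D.src i

/-- The set `A(f) = ω(f) ∪ ⋃_{ν ∈ σ(f)} W^u(ν)`: the union of the sink basic sets
and of the unstable manifolds of the saddle basic sets. -/
def SmaleDecomp.Aset {f : X ≃ₜ X} (D : SmaleDecomp f) : Set X :=
  (⋃ i, D.snk i) ∪ ⋃ i, unstableSetOf f (D.sad i)

/-- The set `R(f) = α(f) ∪ ⋃_{ν ∈ σ(f)} W^s(ν)`. -/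
def SmaleDecomp.Rset {f : X ≃ₜ X} (D : SmaleDecomp f) : Set X :=
  (⋃ i, D.src i) ∪ ⋃ i, stableSetOf f (D.sad i)

/-- A basic set is trivial if it is an (isolated) periodic orbit, equivalently if
it is finite. -/
def TrivialFamily {n : ℕ} (Λ : Fin n → Set X) : Prop :=
  ∀ i, (Λ i).Finite

end Defs

/-- The α-limit set of `x`: subsequential limits of `f^{-k}(x)` as `k → ∞`. -/
def alphaLimitSet {X : Type*} [MetricSpace X] (f : X ≃ₜ X) (x : X) : Set X :=
  {y | ∃ φ : ℕ → ℕ, StrictMono φ ∧ Tendsto (fun n => (⇑f.symm)^[φ n] x) atTop (𝓝 y)}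

/-!
The α-limit set of `x` is the ω-limit set of `x` under `f⁻¹`; in a compact space it is nonempty
and attracts the backward orbit. The saddle basic sets are finitely many pairwise disjoint closed
`f⁻¹`-invariant sets, so the α-limit set meets one of them, `Λ`. Separate `Λ` from the other saddle
sets by disjoint open sets `V ⊇ Λ` and `W`; eventually the backward orbit lies in `V ∪ W`, it enters
`U = V ∩ f(V)` infinitely often, and once in `U` its next point is in `V`, hence not in `W`, hence
in `U` again. So the backward orbit is eventually trapped in `V`, the α-limit set lies in `Λ`, and
the backward orbit converges to `Λ`: `x ∈ W^u(Λ)`.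
-/

open scoped omegaLimit

section OmegaLimit

variable {X : Type*}

theorem eventually_iterate_mem_of_frequently {g : X → X} {x : X} {U W : Set X}
    (hUW : MapsTo g U Wᶜ) (hev : ∀ᶠ k in atTop, g^[k] x ∈ U ∪ W)
    (hfreq : ∃ᶠ k in atTop, g^[k] x ∈ U) : ∀ᶠ k in atTop, g^[k] x ∈ U := by
  obtain ⟨N, hN⟩ := eventually_atTop.1 hev
  obtain ⟨K, hKN, hK⟩ := frequently_atTop.1 hfreq N
  refine eventually_atTop.2 ⟨K, fun k hk => ?_⟩
  induction k, hk using Nat.le_induction with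
  | base => exact hK
  | succ k hk ih =>
    have hnext : g^[k + 1] x ∉ W := by
      rw [Function.iterate_succ_apply']
      exact hUW ih
    exact (hN (k + 1) (by omega)).resolve_right hnext

variable [TopologicalSpace X] [CompactSpace X]

theorem omegaLimit_subset_of_mapsTo [RegularSpace X] {g : X → X} (hg : Continuous g) {x : X}
    {K T : Set X} (hK : IsCompact K) (hT : IsClosed T) (hKT : Disjoint K T) (hgK : MapsTo g K K)
    (hsub : ω⁺ (fun k y => g^[k] y) {x} ⊆ K ∪ T)
    (hmeet : (ω⁺ (fun k y => g^[k] y) {x} ∩ K).Nonempty) :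
    ω⁺ (fun k y => g^[k] y) {x} ⊆ K := by
  obtain ⟨V, W, hV, hW, hKV, hTW, hVW⟩ := SeparatedNhds.of_isCompact_isClosed hK hT hKT
  have hU : IsOpen (V ∩ g ⁻¹' V) := hV.inter (hV.preimage hg)
  have hKU : K ⊆ V ∩ g ⁻¹' V := fun p hp => ⟨hKV hp, hKV (hgK hp)⟩
  have hUW : MapsTo g (V ∩ g ⁻¹' V) Wᶜ := fun p hp => hVW.subset_compl_right hp.2
  have hev : ∀ᶠ k in atTop, g^[k] x ∈ V ∩ g ⁻¹' V ∪ W := by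
    simpa using eventually_mapsTo_of_isOpen_of_omegaLimit_subset _ _ _ (hU.union hW)
      (hsub.trans (union_subset_union hKU hTW))
  have hfreq : ∃ᶠ k in atTop, g^[k] x ∈ V ∩ g ⁻¹' V := by
    obtain ⟨y, hyω, hyK⟩ := hmeet
    exact ((mem_omegaLimit_singleton_iff_mapClusterPt _ _ _ _).1 hyω).frequently
      (hU.mem_nhds (hKU hyK))
  have htrap : ∀ᶠ k in atTop, g^[k] x ∈ V :=
    (eventually_iterate_mem_of_frequently hUW hev hfreq).mono fun _ hk => hk.1
  intro y hy
  have hyV : y ∈ closure V :=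
    ((mem_omegaLimit_singleton_iff_mapClusterPt _ _ _ _).1 hy).mem_closure_of_mem V htrap
  exact (hsub hy).resolve_right fun hyT => (hVW.closure_left hW).notMem_of_mem_left hyV (hTW hyT)

theorem exists_omegaLimit_subset_of_subset_iUnion [RegularSpace X] {ι : Type*} [Finite ι]
    {g : X → X} (hg : Continuous g) {x : X} {K : ι → Set X} (hK : ∀ i, IsClosed (K i))
    (hdisj : Pairwise (Function.onFun Disjoint K)) (hgK : ∀ i, MapsTo g (K i) (K i))
    (hsub : ω⁺ (fun k y => g^[k] y) {x} ⊆ ⋃ i, K i) :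
    ∃ i, ω⁺ (fun k y => g^[k] y) {x} ⊆ K i := by
  obtain ⟨y, hy⟩ := nonempty_omegaLimit atTop (fun k y => g^[k] y) {x} (singleton_nonempty x)
  obtain ⟨i, hyi⟩ := mem_iUnion.1 (hsub hy)
  have hothers : IsClosed (⋃ j : {j // j ≠ i}, K j) := isClosed_iUnion_of_finite fun j => hK j
  refine ⟨i, omegaLimit_subset_of_mapsTo hg (hK i).isCompact hothers
    (disjoint_iUnion_right.2 fun j => hdisj j.2.symm) (hgK i) (fun z hz => ?_) ⟨y, hy, hyi⟩⟩
  obtain ⟨j, hj⟩ := mem_iUnion.1 (hsub hz)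
  by_cases hji : j = i
  · exact .inl (hji ▸ hj)
  · exact .inr (mem_iUnion.2 ⟨⟨j, hji⟩, hj⟩)

end OmegaLimit

theorem tendsto_infDist_iterate_of_omegaLimit_subset {X : Type*} [PseudoMetricSpace X]
    [CompactSpace X] {g : X → X} {x : X} {K : Set X}
    (hsub : ω⁺ (fun k y => g^[k] y) {x} ⊆ K) :
    Tendsto (fun k => infDist (g^[k] x) K) atTop (𝓝 0) := by
  have hK : K.Nonempty := (nonempty_omegaLimit atTop _ _ (singleton_nonempty x)).mono hsub
  refine tendsto_order.2 ⟨fun ε hε => .of_forall fun k => hε.trans_le infDist_nonneg,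
    fun ε hε => ?_⟩
  have hnear := eventually_mapsTo_of_isOpen_of_omegaLimit_subset _ _ _ isOpen_thickening
    (hsub.trans (self_subset_thickening hε K))
  exact hnear.mono fun k hk => (mem_thickening_iff_infDist_lt hK).1 (hk rfl)

theorem alphaLimitSet_eq_omegaLimit {X : Type*} [MetricSpace X] (f : X ≃ₜ X) (x : X) :
    alphaLimitSet f x = ω⁺ (fun k y => (⇑f.symm)^[k] y) {x} := by
  ext y
  rw [mem_omegaLimit_singleton_iff_mapClusterPt]
  constructor
  · rintro ⟨φ, hφ, hy⟩
    exact MapClusterPt.of_comp hφ.tendsto_atTop hy.mapClusterPt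
  · exact MapClusterPt.tendsto_subseq

theorem Homeomorph.mapsTo_symm_of_image_eq {X : Type*} [TopologicalSpace X] {f : X ≃ₜ X}
    {S : Set X} (h : f '' S = S) : MapsTo f.symm S S := fun p hp => by
  obtain ⟨q, hq, rfl⟩ := h.symm ▸ hp
  simpa using hq

theorem mem_unstable_of_alphaLimit_in_saddles_general
    {X : Type*} [MetricSpace X] [CompactSpace X] (f : X ≃ₜ X) (D : SmaleDecomp f)
    (x : X)
    (hx : alphaLimitSet f x ⊆ ⋃ i, D.sad i) :
    (∃ i, x ∈ unstableSetOf f (D.sad i)) ∧ x ∈ D.Aset := by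
  rw [alphaLimitSet_eq_omegaLimit] at hx
  obtain ⟨i, hi⟩ := exists_omegaLimit_subset_of_subset_iUnion f.symm.continuous D.sad_closed
    D.sad_pairwise (fun i => Homeomorph.mapsTo_symm_of_image_eq (D.sad_inv i)) hx
  have hxi : x ∈ unstableSetOf f (D.sad i) := tendsto_infDist_iterate_of_omegaLimit_subset hi
  exact ⟨⟨i, hxi⟩, .inr (mem_iUnion.2 ⟨i, hxi⟩)⟩

/-- Let `f` be a Smale A-homeomorphism of a closed manifold whose source basic sets
are all trivial. If the α-limit set of a point `x` is contained in the union of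
the saddle basic sets, then `x` lies in the unstable manifold of some saddle basic
set; consequently `x ∈ A(f)`. -/
theorem mem_unstable_of_alphaLimit_in_saddles
    {X : Type*} [MetricSpace X] [CompactSpace X] (f : X ≃ₜ X) (D : SmaleDecomp f)
    (hsrc : TrivialFamily D.src) (x : X)
    (hx : alphaLimitSet f x ⊆ ⋃ i, D.sad i) :
    (∃ i, x ∈ unstableSetOf f (D.sad i)) ∧ x ∈ D.Aset :=
  mem_unstable_of_alphaLimit_in_saddles_general f D x hx
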